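/- For a closed subspace Y of a Banach space X, the kernel of the map Q ∘ R_Y* : Y** → (J_X(X) + Y^{⊥⊥})/J_X(X) (where Q is the quotient map from X** and R_Y* : Y** → Y^{⊥⊥} is the isometric isomorphism induced by restriction) equals exactly the canonical image J_Y(Y) of Y in Y**. -/

import Mathlib

open NormedSpace Filter Topology
open scoped ENNReal

noncomputable section

/-- The annihilator of a subspace `Y ⊆ X` inside the continuous dual of `X`. -/
def annih {X : Type*} [SeminormedAddCommGroup X] [NormedSpace ℝ X] (Y : Submodule ℝ X) :
    Submodule ℝ (StrongDual ℝ X) where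
  carrier := {f | ∀ y ∈ Y, f y = 0}
  add_mem' := by
    intro a b ha hb y hy
    simp [ContinuousLinearMap.add_apply, ha y hy, hb y hy]
  zero_mem' := by intro y hy; rfl
  smul_mem' := by
    intro c f hf y hy
    simp [hf y hy]

/-- A Banach space is reflexive iff the canonical embedding into its bidual is surjective. -/
def BReflexive (X : Type*) [SeminormedAddCommGroup X] [NormedSpace ℝ X] : Prop :=
  Function.Surjective (inclusionInDoubleDual ℝ X)

/-- A Banach space is coreflexive iff `X**/J_X(X)` is reflexive. -/
def Coreflexive (X : Type*) [SeminormedAddCommGroup X] [NormedSpace ℝ X] : Prop :=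
  @BReflexive (@HasQuotient.Quotient _ _ Submodule.hasQuotient
      (LinearMap.range (inclusionInDoubleDual ℝ X).toLinearMap))
    (@Submodule.Quotient.seminormedAddCommGroup _ ContinuousLinearMap.toSeminormedAddCommGroup ℝ _ _
      (LinearMap.range (inclusionInDoubleDual ℝ X).toLinearMap))
    (@Submodule.Quotient.normedSpace _ ContinuousLinearMap.toSeminormedAddCommGroup ℝ _ _
      (LinearMap.range (inclusionInDoubleDual ℝ X).toLinearMap) ℝ _ _ _ _)

/-- The adjoint of a continuous linear map between normed spaces. -/
def adj {E F : Type*} [SeminormedAddCommGroup E] [NormedSpace ℝ E]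
    [SeminormedAddCommGroup F] [NormedSpace ℝ F] (f : E →L[ℝ] F) :
    StrongDual ℝ F →L[ℝ] StrongDual ℝ E :=
  (ContinuousLinearMap.compL ℝ E F ℝ).flip f

/-- `X` is weak*-sequentially dense in its bidual. -/
def WStarSeqDense (X : Type*) [SeminormedAddCommGroup X] [NormedSpace ℝ X] : Prop :=
  ∀ F : StrongDual ℝ (StrongDual ℝ X), ∃ x : ℕ → X, ∀ f : StrongDual ℝ X,
    Tendsto (fun n => inclusionInDoubleDual ℝ X (x n) f) atTop (𝓝 (F f))

/-- `x` is a point of weak-to-norm continuity of the closed unit ball of `X`. -/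
def wPC (X : Type*) [SeminormedAddCommGroup X] [NormedSpace ℝ X] (x : X) : Prop :=
  ∀ l : Filter X, (∀ᶠ y in l, ‖y‖ ≤ 1) →
    (∀ f : StrongDual ℝ X, Tendsto (fun y => f y) l (𝓝 (f x))) →
    Tendsto id l (𝓝 x)

/-!
If `R_Y** F = J_X x`, every functional annihilating `Y` kills `x`, so `x ∈ Y` because `Y` is
closed (Hahn–Banach on `X ⧸ Y`). Every functional on `Y` extends to `X` (Hahn–Banach again), so
`F g = F (R_Y f) = f x = g x` for all `g ∈ Y*`, i.e. `F = J_Y x`.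
-/

section

variable {X : Type*} [SeminormedAddCommGroup X] [NormedSpace ℝ X]

theorem adj_adj_inclusionInDoubleDual {E : Type*} [SeminormedAddCommGroup E] [NormedSpace ℝ E]
    (f : E →L[ℝ] X) (e : E) :
    adj (adj f) (inclusionInDoubleDual ℝ E e) = inclusionInDoubleDual ℝ X (f e) :=
  rfl

theorem adj_subtypeL_surjective (Y : Submodule ℝ X) : Function.Surjective (adj Y.subtypeL) :=
  fun g => (exists_extension_norm_eq Y g).imp fun _ hf => ContinuousLinearMap.ext hf.1

theorem adj_subtypeL_eq_zero_of_mem_annih {Y : Submodule ℝ X} {f : StrongDual ℝ X}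
    (hf : f ∈ annih Y) : adj Y.subtypeL f = 0 :=
  ContinuousLinearMap.ext fun y => hf y y.2

theorem mem_of_forall_mem_annih {Y : Submodule ℝ X} (hY : IsClosed (Y : Set X)) {x : X}
    (h : ∀ f ∈ annih Y, f x = 0) : x ∈ Y := by
  have : IsClosed (Y : Set X) := hY
  rw [← Submodule.Quotient.mk_eq_zero]
  refine SeparatingDual.eq_zero_of_forall_dual_eq_zero fun g => h (g.comp Y.mkQL) fun y hy => ?_
  simp [(Submodule.Quotient.mk_eq_zero Y).2 hy]

end

theorem stmt16_general (X : Type*) [NormedAddCommGroup X] [NormedSpace ℝ X]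
    (Y : Submodule ℝ X) (hY : IsClosed (Y : Set X)) :
    ∀ F : StrongDual ℝ (StrongDual ℝ ↥Y),
      (adj (adj (Y.subtypeL)) F ∈ LinearMap.range (inclusionInDoubleDual ℝ X).toLinearMap ↔
        F ∈ LinearMap.range (inclusionInDoubleDual ℝ ↥Y).toLinearMap) := by
  intro F
  constructor
  · rintro ⟨x, hx⟩
    have hF : ∀ f : StrongDual ℝ X, f x = F (adj Y.subtypeL f) := fun f =>
      DFunLike.congr_fun hx f
    have hxY : x ∈ Y := mem_of_forall_mem_annih hY fun f hf => by
      rw [hF, adj_subtypeL_eq_zero_of_mem_annih hf, map_zero]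
    refine ⟨⟨x, hxY⟩, ContinuousLinearMap.ext fun g => ?_⟩
    obtain ⟨f, rfl⟩ := adj_subtypeL_surjective Y g
    exact hF f
  · rintro ⟨y, rfl⟩
    exact ⟨y, (adj_adj_inclusionInDoubleDual Y.subtypeL y).symm⟩

theorem stmt16 (X : Type*) [NormedAddCommGroup X] [NormedSpace ℝ X] [CompleteSpace X]
    (Y : Submodule ℝ X) (hY : IsClosed (Y : Set X)) :
    ∀ F : StrongDual ℝ (StrongDual ℝ ↥Y),
      (adj (adj (Y.subtypeL)) F ∈ LinearMap.range (inclusionInDoubleDual ℝ X).toLinearMap ↔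
        F ∈ LinearMap.range (inclusionInDoubleDual ℝ ↥Y).toLinearMap) :=
  stmt16_general X Y hY
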